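/- arXiv:2507.16425 — 7 statements merged into one kernel-verified Lean document; each statement's English description precedes it below -/
import Mathlib

section
/- Let Ω ⊆ ℝ^d be a nonempty open set, let ω : Ω → 𝕂 and ψ : Ω → Ω be continuous, and suppose the weighted composition operator C_{ω,ψ} is supercyclic on C(Ω, 𝕂) with the compact-open topology. Then ψ is injective. -/
/-!
If `ψ a = ψ b` for some `a ≠ b`, evaluation at the pair `(a, b)` is a continuous surjection
`C(X, 𝕂) → 𝕂 × 𝕂` which sends every `c • T^[n] g` with `n ≥ 1` into the line through
`(ω a, ω b)`, and `c • g` into the line through `(g a, g b)`. The image of a dense projective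
orbit would then be a dense subset of the union of two lines, which is closed and proper.
-/

open Submodule

theorem Submodule.exists_notMem_span_singleton_union {K V : Type*} [Field K] [Infinite K]
    [AddCommGroup V] [Module K V] (hV : 1 < Module.finrank K V) (u w : V) :
    ∃ v, v ∉ ((K ∙ u : Submodule K V) : Set V) ∪ K ∙ w := by
  have hline (x : V) : K ∙ x ≠ ⊤ := by
    intro htop
    have : Module.finrank K (K ∙ x) ≤ 1 := by
      simpa using finrank_span_le_card (R := K) ({x} : Set V)
    rw [htop, finrank_top] at this
    omega
  obtain ⟨v, hv⟩ := exists_forall_notMem_of_forall_ne_top ![K ∙ u, K ∙ w]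
    (Fin.forall_fin_two.mpr ⟨hline u, hline w⟩)
  exact ⟨v, not_or.mpr ⟨hv 0, hv 1⟩⟩

theorem ContinuousMap.exists_apply_eq_apply_eq {X 𝕂 : Type*} [TopologicalSpace X] [T35Space X]
    [RCLike 𝕂] {a b : X} (hab : a ≠ b) (s t : 𝕂) : ∃ h : C(X, 𝕂), h a = s ∧ h b = t := by
  obtain ⟨φ, hφ, hφab⟩ := separatesPoints_continuous_of_t35Space hab
  have hφ : Continuous φ := hφ
  have hden : φ b - φ a ≠ 0 := sub_ne_zero.mpr (Ne.symm hφab)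
  refine ⟨⟨fun z => s + (t - s) * (((φ z - φ a) / (φ b - φ a) : ℝ) : 𝕂), by fun_prop⟩, ?_, ?_⟩
  · simp
  · simp only [ContinuousMap.coe_mk, div_self hden]
    simp

section WeightedComposition

variable {X 𝕂 : Type*} [TopologicalSpace X] [RCLike 𝕂]

theorem ContinuousMap.image_eval_projOrbit_weightedComp_subset (ω : C(X, 𝕂)) {ψ : C(X, X)}
    {a b : X} (hψ : ψ a = ψ b) (g : C(X, 𝕂)) :
    (fun h : C(X, 𝕂) => (h a, h b)) ''
        {h | ∃ (c : 𝕂) (n : ℕ), c • (fun f : C(X, 𝕂) => ω * f.comp ψ)^[n] g = h} ⊆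
      ((𝕂 ∙ (g a, g b) : Submodule 𝕂 (𝕂 × 𝕂)) : Set (𝕂 × 𝕂)) ∪ 𝕂 ∙ (ω a, ω b) := by
  rintro _ ⟨_, ⟨c, n, rfl⟩, rfl⟩
  cases n with
  | zero => exact Or.inl (mem_span_singleton.mpr ⟨c, by simp⟩)
  | succ m =>
    refine Or.inr (mem_span_singleton.mpr ⟨c * (fun f : C(X, 𝕂) => ω * f.comp ψ)^[m] g (ψ a), ?_⟩)
    simp only [Function.iterate_succ_apply', ContinuousMap.smul_apply, ContinuousMap.mul_apply,
      ContinuousMap.comp_apply, hψ, Prod.smul_mk, smul_eq_mul]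
    ext <;> ring

theorem ContinuousMap.injective_of_weightedComp_supercyclic [T35Space X] (ω : C(X, 𝕂))
    (ψ : C(X, X)) (hsc : ∃ g : C(X, 𝕂), Dense {h : C(X, 𝕂) |
      ∃ (c : 𝕂) (n : ℕ), c • (fun f : C(X, 𝕂) => ω * f.comp ψ)^[n] g = h}) :
    Function.Injective ψ := by
  obtain ⟨g, hg⟩ := hsc
  intro a b hψ
  by_contra hab
  have hsurj : Function.Surjective fun h : C(X, 𝕂) => (h a, h b) := fun v =>
    (exists_apply_eq_apply_eq hab v.1 v.2).imp fun h hh => Prod.ext hh.1 hh.2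
  have hdense := hsurj.denseRange.dense_image (by fun_prop) hg
  have hclosed : IsClosed (((𝕂 ∙ (g a, g b) : Submodule 𝕂 (𝕂 × 𝕂)) : Set (𝕂 × 𝕂)) ∪
      𝕂 ∙ (ω a, ω b)) :=
    (closed_of_finiteDimensional _).union (closed_of_finiteDimensional _)
  have hcover := hdense.closure_eq ▸
    hclosed.closure_subset_iff.mpr (image_eval_projOrbit_weightedComp_subset ω hψ g)
  obtain ⟨v, hv⟩ := exists_notMem_span_singleton_union (K := 𝕂) (by simp)
    (g a, g b) (ω a, ω b)
  exact hv (hcover (Set.mem_univ v))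

end WeightedComposition

theorem stmt_2_general {𝕂 : Type*} [RCLike 𝕂] {d : ℕ} (Ω : Set (Fin d → ℝ))
    (ω : C(↥Ω, 𝕂)) (ψ : C(↥Ω, ↥Ω))
    (hsc : ∃ g : C(↥Ω, 𝕂), Dense {h : C(↥Ω, 𝕂) |
      ∃ (c : 𝕂) (n : ℕ), c • (fun f : C(↥Ω, 𝕂) => ω * f.comp ψ)^[n] g = h}) :
    Function.Injective ⇑ψ :=
  ContinuousMap.injective_of_weightedComp_supercyclic ω ψ hsc

/-- If the weighted composition operator `f ↦ ω · (f ∘ ψ)` is supercyclic on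
`C(Ω, 𝕂)` with the compact-open topology, then `ψ` is injective. -/
theorem stmt_2 {𝕂 : Type*} [RCLike 𝕂] {d : ℕ} (Ω : Set (Fin d → ℝ))
    (hΩ : IsOpen Ω) (hne : Ω.Nonempty)
    (ω : C(↥Ω, 𝕂)) (ψ : C(↥Ω, ↥Ω))
    (hsc : ∃ g : C(↥Ω, 𝕂), Dense {h : C(↥Ω, 𝕂) |
      ∃ (c : 𝕂) (n : ℕ), c • (fun f : C(↥Ω, 𝕂) => ω * f.comp ψ)^[n] g = h}) :
    Function.Injective ⇑ψ :=
  stmt_2_general Ω ω ψ hsc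
end

section
/- Let Ω ⊆ ℝ^d be open, let ψ : Ω → Ω be continuous, let K ⊆ Ω be compact, let C > 0, and let d : Ω → ℝ be continuous with d = 0 on K and 0 < d(x) ≤ 1 for every x ∈ Ω∖K. Assume that for every x ∈ Ω there exists n ∈ ℕ with ψ_n(x) ∉ K. Then the series D(y) := Σ_{n=0}^∞ (C+1)^{−n}·d(ψ_n(y)) converges for every y ∈ Ω, the function D is continuous on Ω, D(y) > 0 for every y ∈ Ω, and D(ψ(x)) = (C+1)·D(x) for every x ∈ K. -/
/-!
Since `0 ≤ u ≤ 1`, the series is dominated by the geometric series `∑ (C+1)^{-n}`, so by the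
Weierstrass M-test it converges uniformly and its sum is continuous. Positivity comes from a
single positive term, supplied by an iterate escaping `K`. For `x ∈ K` the term `n = 0` vanishes,
so shifting the index by one gives `D(ψ x) = (C+1) D(x)`.
-/

open Function

-- The paper's `D` is `discountedOrbitSum (C + 1) ψ d`.
noncomputable def discountedOrbitSum {X : Type*} (q : ℝ) (f : X → X) (u : X → ℝ) (x : X) : ℝ :=
  ∑' n : ℕ, (q ^ n)⁻¹ * u (f^[n] x)

section DiscountedOrbitSum

variable {X : Type*} {q : ℝ} {f : X → X} {u : X → ℝ}

lemma norm_inv_pow_mul_le {a : ℝ} (hq : 0 < q) (ha : a ∈ Set.Icc (0 : ℝ) 1) (n : ℕ) :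
    ‖(q ^ n)⁻¹ * a‖ ≤ q⁻¹ ^ n := by
  rw [norm_mul, norm_inv, norm_pow, Real.norm_of_nonneg hq.le, Real.norm_of_nonneg ha.1, inv_pow]
  exact mul_le_of_le_one_right (by positivity) ha.2

lemma summable_geometric_inv_of_one_lt (hq : 1 < q) : Summable fun n : ℕ => q⁻¹ ^ n :=
  summable_geometric_of_lt_one (by positivity) (inv_lt_one_of_one_lt₀ hq)

lemma summable_inv_pow_mul_iterate (hq : 1 < q) (hu : ∀ x, u x ∈ Set.Icc (0 : ℝ) 1) (x : X) :
    Summable fun n : ℕ => (q ^ n)⁻¹ * u (f^[n] x) :=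
  .of_norm_bounded (summable_geometric_inv_of_one_lt hq)
    fun n => norm_inv_pow_mul_le (by linarith) (hu _) n

lemma continuous_discountedOrbitSum [TopologicalSpace X] (hq : 1 < q) (hf : Continuous f)
    (hu : Continuous u) (hu₀₁ : ∀ x, u x ∈ Set.Icc (0 : ℝ) 1) :
    Continuous (discountedOrbitSum q f u) :=
  continuous_tsum (fun n => continuous_const.mul (hu.comp (hf.iterate n)))
    (summable_geometric_inv_of_one_lt hq) fun n _ => norm_inv_pow_mul_le (by linarith) (hu₀₁ _) n

lemma discountedOrbitSum_pos (hq : 1 < q) (hu : ∀ x, u x ∈ Set.Icc (0 : ℝ) 1) {x : X} {n : ℕ}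
    (hn : 0 < u (f^[n] x)) : 0 < discountedOrbitSum q f u x := by
  have hq₀ : 0 < q := by linarith
  exact (summable_inv_pow_mul_iterate hq hu x).tsum_pos
    (fun k => mul_nonneg (by positivity) (hu _).1) n (by positivity)

lemma discountedOrbitSum_apply_of_eq_zero (hq : 1 < q) (hu : ∀ x, u x ∈ Set.Icc (0 : ℝ) 1) {x : X}
    (hx : u x = 0) : discountedOrbitSum q f u (f x) = q * discountedOrbitSum q f u x := by
  have hq₀ : q ≠ 0 := by positivity
  unfold discountedOrbitSum
  rw [(summable_inv_pow_mul_iterate hq hu x).tsum_eq_zero_add, iterate_zero_apply, hx, mul_zero,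
    zero_add, ← tsum_mul_left]
  congr 1 with n
  rw [iterate_succ_apply, pow_succ]
  field_simp

end DiscountedOrbitSum

theorem stmt_5_general {m : ℕ} (Ω : Set (Fin m → ℝ))
    (ψ : ↥Ω → ↥Ω) (hψ : Continuous ψ)
    (K : Set ↥Ω)
    (C : ℝ) (hC : 0 < C)
    (u : ↥Ω → ℝ) (hu : Continuous u)
    (huK : ∀ x ∈ K, u x = 0)
    (hupos : ∀ x : ↥Ω, x ∉ K → 0 < u x ∧ u x ≤ 1)
    (hesc : ∀ x : ↥Ω, ∃ n : ℕ, ψ^[n] x ∉ K) :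
    (∀ y : ↥Ω, Summable (fun n : ℕ => ((C + 1) ^ n)⁻¹ * u (ψ^[n] y)))
    ∧ Continuous (fun y : ↥Ω => ∑' n : ℕ, ((C + 1) ^ n)⁻¹ * u (ψ^[n] y))
    ∧ (∀ y : ↥Ω, 0 < ∑' n : ℕ, ((C + 1) ^ n)⁻¹ * u (ψ^[n] y))
    ∧ (∀ x ∈ K, (∑' n : ℕ, ((C + 1) ^ n)⁻¹ * u (ψ^[n] (ψ x)))
        = (C + 1) * ∑' n : ℕ, ((C + 1) ^ n)⁻¹ * u (ψ^[n] x)) := by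
  have hq : 1 < C + 1 := by linarith
  have hu₀₁ : ∀ x, u x ∈ Set.Icc (0 : ℝ) 1 := fun x => by
    by_cases hx : x ∈ K
    · simp [huK x hx]
    · exact ⟨(hupos x hx).1.le, (hupos x hx).2⟩
  refine ⟨summable_inv_pow_mul_iterate hq hu₀₁, continuous_discountedOrbitSum hq hψ hu hu₀₁,
    fun y => ?_, fun x hx => discountedOrbitSum_apply_of_eq_zero hq hu₀₁ (huK x hx)⟩
  obtain ⟨n, hn⟩ := hesc y
  exact discountedOrbitSum_pos hq hu₀₁ (hupos _ hn).1

/-- The auxiliary series `D(y) = Σ_{n≥0} (C+1)^{−n} d(ψ_n(y))` converges, is continuous,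
is strictly positive, and satisfies `D(ψ(x)) = (C+1)·D(x)` on `K`. -/
theorem stmt_5 {m : ℕ} (Ω : Set (Fin m → ℝ)) (hΩ : IsOpen Ω)
    (ψ : ↥Ω → ↥Ω) (hψ : Continuous ψ)
    (K : Set ↥Ω) (hK : IsCompact K)
    (C : ℝ) (hC : 0 < C)
    (u : ↥Ω → ℝ) (hu : Continuous u)
    (huK : ∀ x ∈ K, u x = 0)
    (hupos : ∀ x : ↥Ω, x ∉ K → 0 < u x ∧ u x ≤ 1)
    (hesc : ∀ x : ↥Ω, ∃ n : ℕ, ψ^[n] x ∉ K) :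
    (∀ y : ↥Ω, Summable (fun n : ℕ => ((C + 1) ^ n)⁻¹ * u (ψ^[n] y)))
    ∧ Continuous (fun y : ↥Ω => ∑' n : ℕ, ((C + 1) ^ n)⁻¹ * u (ψ^[n] y))
    ∧ (∀ y : ↥Ω, 0 < ∑' n : ℕ, ((C + 1) ^ n)⁻¹ * u (ψ^[n] y))
    ∧ (∀ x ∈ K, (∑' n : ℕ, ((C + 1) ^ n)⁻¹ * u (ψ^[n] (ψ x)))
        = (C + 1) * ∑' n : ℕ, ((C + 1) ^ n)⁻¹ * u (ψ^[n] x)) :=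
  stmt_5_general Ω ψ hψ K C hC u hu huK hupos hesc
end

section
/- Let Ω ⊆ ℝ^d be a nonempty open set, let ω : Ω → 𝕂 be continuous and zero-free (ω(x) ≠ 0 for all x ∈ Ω), and let ψ : Ω → Ω be continuous with no fixed points (ψ(x) ≠ x for all x ∈ Ω). If the weighted composition operator C_{ω,ψ} is supercyclic on C(Ω, 𝕂) with the compact-open topology, then for every x ∈ Ω the closure in Ω of the forward orbit {ψ_n(x) : n ∈ ℕ₀} is not a compact subset of Ω. -/
/-!
Write `T = C_{ω,ψ}`, `xᵢ = ψᵢ(x)` and `aⱼ = (Tʲ g)(x)`. Since `(Tⁱ f)(x) = ω(x₀)⋯ω(xᵢ₋₁) f(xᵢ)`,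
every approximant `f = c Tⁿ g` satisfies
`‖a_{i+n+1}‖ ‖f(xᵢ)‖ = ‖ω(xᵢ)‖ ‖f(xᵢ₊₁)‖ ‖a_{i+n}‖`.
If the orbit closure `K` were compact, then `‖ω‖ ≥ m > 0` on `K`, and approximating `1` uniformly
on `K` forces `‖a_{j+1}‖ ≥ (m/3) ‖a_j‖` for all large `j`. On the other hand, a cluster point `z`
of the orbit is not fixed by `ψ`, so a function equal to `1` at `z` and to `0` at `ψ z` can be
approximated on `K`; at orbit points close to `z` this makes `‖a_{j+1}‖ / ‖a_j‖` small for some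
large `j`.
-/

open Filter Function Set Topology

def projectiveOrbit (𝕂 : Type*) {X : Type*} [SMul 𝕂 X] (T : X → X) (g : X) : Set X :=
  {h | ∃ (c : 𝕂) (n : ℕ), c • T^[n] g = h}

section

variable {α 𝕂 : Type*} [TopologicalSpace α] [RCLike 𝕂]

theorem Dense.exists_forall_dist_lt_of_isCompact {E : Type*} [PseudoMetricSpace E]
    {S : Set C(α, E)} (hS : Dense S) {K : Set α} (hK : IsCompact K) (f : C(α, E)) {ε : ℝ}
    (hε : 0 < ε) : ∃ h ∈ S, ∀ y ∈ K, dist (h y) (f y) < ε := by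
  have hU : {p : C(α, E) × C(α, E) | ∀ y ∈ K, dist (p.2 y) (p.1 y) < ε} ∈ uniformity C(α, E) :=
    (ContinuousMap.mem_compactConvergence_entourage_iff _).2
      ⟨K, _, hK, Metric.dist_mem_uniformity hε, fun p hp y hy => by
        rw [dist_comm]; exact hp y hy⟩
  exact hS.inter_nhds_nonempty (UniformSpace.ball_mem_nhds f hU)

def weightedComp (ω : C(α, 𝕂)) (ψ : C(α, α)) (f : C(α, 𝕂)) : C(α, 𝕂) := ω * f.comp ψ

section

variable (ω : C(α, 𝕂)) (ψ : C(α, α))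

theorem weightedComp_iterate_apply (n : ℕ) (f : C(α, 𝕂)) (y : α) :
    (weightedComp ω ψ)^[n] f y = (∏ i ∈ Finset.range n, ω (ψ^[i] y)) * f (ψ^[n] y) := by
  induction n generalizing f with
  | zero => simp
  | succ n ih =>
    rw [iterate_succ_apply, ih, Finset.prod_range_succ, iterate_succ_apply']
    simp only [weightedComp, ContinuousMap.mul_apply, ContinuousMap.comp_apply]
    ring

theorem weightedComp_iterate_apply_ne_zero (hω : ∀ y, ω y ≠ 0) {n : ℕ} {f : C(α, 𝕂)} {y : α}
    (hf : f (ψ^[n] y) ≠ 0) : (weightedComp ω ψ)^[n] f y ≠ 0 := by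
  rw [weightedComp_iterate_apply]
  exact mul_ne_zero (Finset.prod_ne_zero_iff.2 fun i _ => hω _) hf

theorem weightedComp_iterate_succ_apply_mul (i : ℕ) (f : C(α, 𝕂)) (y : α) :
    (weightedComp ω ψ)^[i + 1] f y * f (ψ^[i] y) =
      ω (ψ^[i] y) * f (ψ^[i + 1] y) * (weightedComp ω ψ)^[i] f y := by
  simp only [weightedComp_iterate_apply, Finset.prod_range_succ]
  ring

theorem norm_weightedComp_iterate_mul_norm_smul (i n : ℕ) (c : 𝕂) (g : C(α, 𝕂)) (y : α) :
    ‖(weightedComp ω ψ)^[i + 1 + n] g y‖ * ‖(c • (weightedComp ω ψ)^[n] g) (ψ^[i] y)‖ =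
      ‖ω (ψ^[i] y)‖ * ‖(c • (weightedComp ω ψ)^[n] g) (ψ^[i + 1] y)‖ *
        ‖(weightedComp ω ψ)^[i + n] g y‖ := by
  have h := congrArg (‖c‖ * ‖·‖) (weightedComp_iterate_succ_apply_mul ω ψ i
    ((weightedComp ω ψ)^[n] g) y)
  simp only [norm_mul, ← iterate_add_apply] at h
  simp only [ContinuousMap.smul_apply, smul_eq_mul, norm_mul]
  linear_combination h

theorem mul_norm_weightedComp_iterate_le_succ {g : C(α, 𝕂)} {x : α} {m : ℝ}
    (hm : ∀ i, m ≤ ‖ω (ψ^[i] x)‖) {c : 𝕂} {n : ℕ}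
    (hc : ∀ i, dist ((c • (weightedComp ω ψ)^[n] g) (ψ^[i] x)) 1 < 1 / 2) {j : ℕ} (hj : n ≤ j) :
    m * ‖(weightedComp ω ψ)^[j] g x‖ ≤ 3 * ‖(weightedComp ω ψ)^[j + 1] g x‖ := by
  obtain ⟨i, rfl⟩ := Nat.exists_eq_add_of_le' hj
  have hbound : ∀ i, |‖(c • (weightedComp ω ψ)^[n] g) (ψ^[i] x)‖ - 1| < 1 / 2 := fun i => by
    simpa only [norm_one] using
      (abs_norm_sub_norm_le ((c • (weightedComp ω ψ)^[n] g) (ψ^[i] x)) 1).trans_lt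
        (by simpa only [dist_eq_norm] using hc i)
  have key := norm_weightedComp_iterate_mul_norm_smul ω ψ i n c g x
  rw [add_right_comm] at key
  have hp := (abs_sub_lt_iff.1 (hbound i)).1
  have hq := (abs_sub_lt_iff.1 (hbound (i + 1))).2
  have hmw : m ≤ 2 * ‖(c • (weightedComp ω ψ)^[n] g) (ψ^[i + 1] x)‖ * ‖ω (ψ^[i] x)‖ := by
    nlinarith [hm i, norm_nonneg (ω (ψ^[i] x))]
  calc m * ‖(weightedComp ω ψ)^[i + n] g x‖
      ≤ 2 * ‖(c • (weightedComp ω ψ)^[n] g) (ψ^[i + 1] x)‖ * ‖ω (ψ^[i] x)‖ *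
          ‖(weightedComp ω ψ)^[i + n] g x‖ := by gcongr
    _ = 2 * (‖(weightedComp ω ψ)^[i + n + 1] g x‖ *
          ‖(c • (weightedComp ω ψ)^[n] g) (ψ^[i] x)‖) := by rw [key]; ring
    _ ≤ 2 * (‖(weightedComp ω ψ)^[i + n + 1] g x‖ * (3 / 2)) := by gcongr; linarith
    _ = 3 * ‖(weightedComp ω ψ)^[i + n + 1] g x‖ := by ring

theorem one_sub_mul_norm_weightedComp_iterate_succ_le {g : C(α, 𝕂)} {x : α} {c : 𝕂} {n k : ℕ}
    {ε : ℝ} (h₁ : dist ((c • (weightedComp ω ψ)^[n] g) (ψ^[k] x)) 1 < ε)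
    (h₀ : dist ((c • (weightedComp ω ψ)^[n] g) (ψ^[k + 1] x)) 0 < ε) :
    (1 - ε) * ‖(weightedComp ω ψ)^[k + n + 1] g x‖ ≤
      ε * ‖ω (ψ^[k] x)‖ * ‖(weightedComp ω ψ)^[k + n] g x‖ := by
  have key := norm_weightedComp_iterate_mul_norm_smul ω ψ k n c g x
  rw [add_right_comm] at key
  rw [dist_zero_right] at h₀
  have hp : 1 - ε < ‖(c • (weightedComp ω ψ)^[n] g) (ψ^[k] x)‖ := by
    have := norm_sub_norm_le (1 : 𝕂) ((c • (weightedComp ω ψ)^[n] g) (ψ^[k] x))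
    rw [norm_one, ← dist_eq_norm, dist_comm] at this
    linarith
  calc (1 - ε) * ‖(weightedComp ω ψ)^[k + n + 1] g x‖
      ≤ ‖(weightedComp ω ψ)^[k + n + 1] g x‖ * ‖(c • (weightedComp ω ψ)^[n] g) (ψ^[k] x)‖ := by
        rw [mul_comm]
        gcongr
    _ = ‖ω (ψ^[k] x)‖ * ‖(c • (weightedComp ω ψ)^[n] g) (ψ^[k + 1] x)‖ *
          ‖(weightedComp ω ψ)^[k + n] g x‖ := key
    _ ≤ ε * ‖ω (ψ^[k] x)‖ * ‖(weightedComp ω ψ)^[k + n] g x‖ := by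
        rw [mul_comm ε]
        gcongr

end

theorem exists_continuousMap_eq_one_eq_zero [T35Space α] {z w : α} (h : z ≠ w) :
    ∃ u : C(α, 𝕂), u z = 1 ∧ u w = 0 := by
  obtain ⟨f, hf, hfw, hfz⟩ :=
    CompletelyRegularSpace.completely_regular w {z} isClosed_singleton h.symm
  exact ⟨⟨fun y => ((f y : ℝ) : 𝕂), by fun_prop⟩, by simp [hfz rfl], by simp [hfw]⟩

theorem exists_continuousMap_frequently_near_one_zero [T35Space α] {ψ : C(α, α)}
    (hψ : ∀ y, ψ y ≠ y) {x : α} (hK : IsCompact (closure (range fun n => ψ^[n] x))) :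
    ∃ u : C(α, 𝕂), ∀ ε > 0, ∀ N, ∃ k ≥ N,
      dist (u (ψ^[k] x)) 1 < ε ∧ dist (u (ψ^[k + 1] x)) 0 < ε := by
  obtain ⟨z, -, hz⟩ := hK.exists_mapClusterPt (f := atTop)
    (tendsto_principal.2 (Eventually.of_forall fun i => subset_closure (mem_range_self i)))
  obtain ⟨u, hu₁, hu₀⟩ := exists_continuousMap_eq_one_eq_zero (𝕂 := 𝕂) (hψ z).symm
  refine ⟨u, fun ε hε N => ?_⟩
  have hnear : ∀ᶠ y in 𝓝 z, dist (u y) 1 < ε ∧ dist (u (ψ y)) 0 < ε :=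
    (Metric.tendsto_nhds.1 (hu₁ ▸ u.continuous.tendsto z) ε hε).and
      (Metric.tendsto_nhds.1 (hu₀ ▸ (u.continuous.comp ψ.continuous).tendsto z) ε hε)
  simpa only [iterate_succ_apply'] using frequently_atTop.1 (hz.frequently hnear) N

theorem exists_smul_iterate_near_one_zero_on_orbit [T35Space α] {ψ : C(α, α)}
    (hψ : ∀ y, ψ y ≠ y) {x : α} (hK : IsCompact (closure (range fun n => ψ^[n] x)))
    {T : C(α, 𝕂) → C(α, 𝕂)} {g : C(α, 𝕂)} (hg : Dense (projectiveOrbit 𝕂 T g)) {ε : ℝ}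
    (hε : 0 < ε) (N : ℕ) : ∃ k ≥ N, ∃ (c : 𝕂) (n : ℕ),
      dist ((c • T^[n] g) (ψ^[k] x)) 1 < ε ∧ dist ((c • T^[n] g) (ψ^[k + 1] x)) 0 < ε := by
  obtain ⟨u, hu⟩ := exists_continuousMap_frequently_near_one_zero (𝕂 := 𝕂) hψ hK
  obtain ⟨k, hk, hk₁, hk₀⟩ := hu (ε / 2) (half_pos hε) N
  obtain ⟨_, ⟨c, n, rfl⟩, hc⟩ := hg.exists_forall_dist_lt_of_isCompact hK u (half_pos hε)
  have horbit (i : ℕ) : ψ^[i] x ∈ closure (range fun n => ψ^[n] x) :=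
    subset_closure (mem_range_self i)
  exact ⟨k, hk, c, n,
    (dist_triangle _ _ _).trans_lt (add_halves ε ▸ add_lt_add (hc _ (horbit k)) hk₁),
    (dist_triangle _ _ _).trans_lt (add_halves ε ▸ add_lt_add (hc _ (horbit (k + 1))) hk₀)⟩

theorem not_isCompact_closure_orbit_of_dense_projectiveOrbit [T35Space α] {ω : C(α, 𝕂)}
    (hω : ∀ y, ω y ≠ 0) {ψ : C(α, α)} (hψ : ∀ y, ψ y ≠ y) {g : C(α, 𝕂)}
    (hg : Dense (projectiveOrbit 𝕂 (weightedComp ω ψ) g)) (x : α) :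
    ¬ IsCompact (closure (range fun n => ψ^[n] x)) := by
  intro hK
  set T := weightedComp ω ψ
  have horbit : ∀ i, ψ^[i] x ∈ closure (range fun n => ψ^[n] x) :=
    fun i => subset_closure (mem_range_self i)
  obtain ⟨m, hm0, hm⟩ := hK.exists_forall_le' ω.continuous.norm.continuousOn
    fun y _ => norm_pos_iff.2 (hω y)
  obtain ⟨M, hM⟩ := hK.exists_bound_of_continuousOn ω.continuous.continuousOn
  have hmM : m ≤ M := (hm _ (horbit 0)).trans (hM _ (horbit 0))
  obtain ⟨_, ⟨c₁, n₁, rfl⟩, hc₁⟩ := hg.exists_forall_dist_lt_of_isCompact hK 1 one_half_pos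
  have hgrowth : ∀ j ≥ n₁, m * ‖T^[j] g x‖ ≤ 3 * ‖T^[j + 1] g x‖ := fun j hj =>
    mul_norm_weightedComp_iterate_le_succ ω ψ (fun i => hm _ (horbit i))
      (fun i => hc₁ _ (horbit i)) hj
  have hM0 : 0 < M := hm0.trans_le hmM
  -- chosen so that `M * ε = m / 7 < (1 - ε) * (m / 3)`
  set ε := m / (7 * M)
  have hε : 0 < ε := by positivity
  have hε₁ : ε ≤ 1 / 7 := by
    rw [div_le_iff₀ (by positivity)]
    linarith
  have hMε : M * ε = m / 7 := by
    simp only [ε]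
    field_simp
  obtain ⟨k, hk, c₂, n₂, hnear₁, hnear₀⟩ :=
    exists_smul_iterate_near_one_zero_on_orbit hψ hK hg hε n₁
  have hne : T^[k + n₂] g x ≠ 0 := by
    rw [iterate_add_apply]
    refine weightedComp_iterate_apply_ne_zero ω ψ hω (right_ne_zero_of_mul (a := c₂) fun h₀ => ?_)
    rw [show (c₂ • T^[n₂] g) (ψ^[k] x) = 0 from h₀, dist_zero_left, norm_one] at hnear₁
    linarith
  have hA := norm_pos_iff.2 hne
  have hdecay := one_sub_mul_norm_weightedComp_iterate_succ_le ω ψ hnear₁ hnear₀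
  have hgrow := mul_le_mul_of_nonneg_left (hgrowth (k + n₂) (by omega))
    (by linarith : (0 : ℝ) ≤ 1 - ε)
  have hw : ε * ‖ω (ψ^[k] x)‖ * ‖T^[k + n₂] g x‖ ≤ ε * M * ‖T^[k + n₂] g x‖ := by
    gcongr
    exact hM _ (horbit k)
  nlinarith [mul_pos hm0 hA]

end

theorem stmt_6_general {𝕂 : Type*} [RCLike 𝕂] {d : ℕ} (Ω : Set (Fin d → ℝ))
    (ω : C(↥Ω, 𝕂)) (hω : ∀ x : ↥Ω, ω x ≠ 0)
    (ψ : C(↥Ω, ↥Ω)) (hfix : ∀ x : ↥Ω, ψ x ≠ x)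
    (hsc : ∃ g : C(↥Ω, 𝕂), Dense {h : C(↥Ω, 𝕂) |
      ∃ (c : 𝕂) (n : ℕ), c • (fun f : C(↥Ω, 𝕂) => ω * f.comp ψ)^[n] g = h}) :
    ∀ x : ↥Ω, ¬ IsCompact (closure (Set.range fun n : ℕ => (⇑ψ)^[n] x)) := by
  obtain ⟨g, hg⟩ := hsc
  exact not_isCompact_closure_orbit_of_dense_projectiveOrbit hω hfix hg

/-- If `C_{ω,ψ}` is supercyclic on `C(Ω, 𝕂)` (compact-open topology), `ω` is zero-free
and `ψ` has no fixed points, then for every `x ∈ Ω` the closure in `Ω` of the forward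
orbit `{ψ_n(x) : n ∈ ℕ}` is not compact. -/
theorem stmt_6 {𝕂 : Type*} [RCLike 𝕂] {d : ℕ} (Ω : Set (Fin d → ℝ))
    (hΩ : IsOpen Ω) (hne : Ω.Nonempty)
    (ω : C(↥Ω, 𝕂)) (hω : ∀ x : ↥Ω, ω x ≠ 0)
    (ψ : C(↥Ω, ↥Ω)) (hfix : ∀ x : ↥Ω, ψ x ≠ x)
    (hsc : ∃ g : C(↥Ω, 𝕂), Dense {h : C(↥Ω, 𝕂) |
      ∃ (c : 𝕂) (n : ℕ), c • (fun f : C(↥Ω, 𝕂) => ω * f.comp ψ)^[n] g = h}) :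
    ∀ x : ↥Ω, ¬ IsCompact (closure (Set.range fun n : ℕ => (⇑ψ)^[n] x)) :=
  stmt_6_general Ω ω hω ψ hfix hsc
end

section
/- Let Ω ⊆ ℝ^d be open, let ψ : Ω → Ω be continuous, injective and strongly run-away, let K ⊆ Ω be a nonempty compact set, let ρ > 0 be such that the compact set L := {x ∈ ℝ^d : dist(x, K) ≤ ρ} is contained in Ω, and let N ≥ 1 be such that ψ_n(L) ∩ L = ∅ for every n ≥ N. For k ∈ ℤ define L_k := ψ_{kN}(L) if k ≥ 0 and L_k := (ψ_{−kN})^{−1}(L) if k < 0. Then: (a) the interior of ⋃_{k∈ℤ} L_k equals ⋃_{k∈ℤ} interior(L_k); (b) the set ⋃_{k∈ℤ} L_k is closed in the subspace topology of Ω; and (c) the boundary of ⋃_{k∈ℤ} L_k relative to Ω equals ⋃_{k∈ℤ} of the boundaries of L_k relative to Ω. -/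
/-!
Each `L_k` is closed, being the image or the preimage of the compact set `L` under an iterate
of `ψ`. Injectivity and the choice of `N` make them pairwise disjoint: a common point of `L_j` and `L_k`,
`j < k`, would produce a point of `L` returning to `L` after at least `N` steps. Strong run-away
makes the family locally finite: a compact neighbourhood `C` meets `L_k` only if some point of
`C ∪ L` returns to `C ∪ L` after `|k| N` steps. For a locally finite, pairwise disjoint family of
closed sets, the union is closed, and a point of the interior of the union lying in `L_j` has a
neighbourhood avoiding the (closed) union of the other members, which gives (a) and then (c).
-/

/-- The sets `L_k` built from iterating a strongly run-away map: `L_k := ψ_{kN}(L)` for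
`k ≥ 0` and `L_k := (ψ_{−kN})^{−1}(L)` for `k < 0`. -/
def stmtLk {d : ℕ} {Ω : Set (Fin d → ℝ)} (ψ : ↥Ω → ↥Ω) (L : Set ↥Ω) (N : ℕ) (k : ℤ) :
    Set ↥Ω :=
  if 0 ≤ k then ψ^[k.toNat * N] '' L else ψ^[(-k).toNat * N] ⁻¹' L

open Set Function Metric

section LocallyFinite

variable {ι X : Type*} [TopologicalSpace X] {f : ι → Set X}

theorem LocallyFinite.interior_iUnion_of_pairwise_disjoint (hlf : LocallyFinite f)
    (hcl : ∀ i, IsClosed (f i)) (hdisj : Pairwise (Disjoint on f)) :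
    interior (⋃ i, f i) = ⋃ i, interior (f i) := by
  refine Subset.antisymm (fun x hx => ?_)
    (iUnion_subset fun i => interior_mono (subset_iUnion f i))
  obtain ⟨j, hj⟩ := mem_iUnion.1 (interior_subset hx)
  have hothers : IsClosed (⋃ i : {i // i ≠ j}, f i) :=
    (hlf.comp_injective Subtype.val_injective).isClosed_iUnion fun i => hcl i
  have hxothers : x ∉ ⋃ i : {i // i ≠ j}, f i := by
    rintro ⟨-, ⟨⟨i, hij⟩, rfl⟩, hxi⟩
    exact (hdisj hij).le_bot ⟨hxi, hj⟩
  refine mem_iUnion.2 ⟨j, mem_interior.2 ⟨_, ?_, isOpen_interior.sdiff hothers, hx, hxothers⟩⟩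
  rintro y ⟨hy, hyothers⟩
  obtain ⟨i, hyi⟩ := mem_iUnion.1 (interior_subset hy)
  by_contra hij
  exact hyothers (mem_iUnion.2 ⟨⟨i, fun h => hij (h ▸ hyi)⟩, hyi⟩)

theorem LocallyFinite.frontier_iUnion_of_pairwise_disjoint (hlf : LocallyFinite f)
    (hcl : ∀ i, IsClosed (f i)) (hdisj : Pairwise (Disjoint on f)) :
    frontier (⋃ i, f i) = ⋃ i, frontier (f i) := by
  rw [(hlf.isClosed_iUnion hcl).frontier_eq, hlf.interior_iUnion_of_pairwise_disjoint hcl hdisj]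
  ext x
  simp only [mem_sdiff, mem_iUnion, (hcl _).frontier_eq, not_exists]
  constructor
  · rintro ⟨⟨k, hk⟩, hnotint⟩
    exact ⟨k, hk, hnotint k⟩
  · rintro ⟨k, hk, hnk⟩
    refine ⟨⟨k, hk⟩, fun j hj => ?_⟩
    rcases eq_or_ne j k with rfl | hjk
    · exact hnk hj
    · exact (hdisj hjk).le_bot ⟨interior_subset hj, hk⟩

end LocallyFinite

theorem Function.Injective.eq_iterate_of_iterate_eq {α : Type*} {f : α → α} (hf : Injective f)
    {a b p q : ℕ} {x y z : α} (h₁ : f^[a + p] x = f^[b] y) (h₂ : f^[a] x = f^[b + q] z) :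
    y = f^[p + q] z := by
  apply hf.iterate b
  rw [← h₁, add_comm a p, iterate_add_apply, h₂, ← iterate_add_apply, ← iterate_add_apply]
  congr 1
  omega

theorem Metric.mem_cthickening_iff_infDist_le {α : Type*} [PseudoMetricSpace α] {s : Set α}
    {x : α} {δ : ℝ} (hs : s.Nonempty) (hδ : 0 ≤ δ) :
    x ∈ cthickening δ s ↔ infDist x s ≤ δ := by
  rw [mem_cthickening_iff, ENNReal.le_ofReal_iff_toReal_le (infEDist_ne_top hs) hδ, infDist]

section StmtLk

variable {d : ℕ} {Ω : Set (Fin d → ℝ)} {ψ : Ω → Ω} {L : Set Ω} {N : ℕ}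

theorem mem_stmtLk_iff {k : ℤ} {x : Ω} :
    x ∈ stmtLk ψ L N k ↔ ∃ y ∈ L, ψ^[(-k).toNat * N] x = ψ^[k.toNat * N] y := by
  unfold stmtLk
  split_ifs with hk
  · rw [show (-k).toNat = 0 by omega]
    simp only [mem_image, zero_mul, iterate_zero, id_eq, eq_comm]
  · simp [show k.toNat = 0 by omega]

theorem exists_iterate_eq_of_mem_stmtLk {k : ℤ} {x : Ω} (hx : x ∈ stmtLk ψ L N k) :
    ∃ y ∈ L, ψ^[k.natAbs * N] y = x ∨ ψ^[k.natAbs * N] x = y := by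
  unfold stmtLk at hx
  split_ifs at hx with hk
  · obtain ⟨y, hy, rfl⟩ := hx
    exact ⟨y, hy, .inl (by rw [show k.toNat = k.natAbs by omega])⟩
  · exact ⟨_, hx, .inr (by rw [show (-k).toNat = k.natAbs by omega])⟩

theorem isClosed_stmtLk (hcont : Continuous ψ) (hL : IsCompact L) (k : ℤ) :
    IsClosed (stmtLk ψ L N k) := by
  unfold stmtLk
  split_ifs
  · exact (hL.image (hcont.iterate _)).isClosed
  · exact hL.isClosed.preimage (hcont.iterate _)

theorem pairwise_disjoint_stmtLk (hinj : Injective ψ)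
    (hrun : ∀ n : ℕ, N ≤ n → ψ^[n] '' L ∩ L = ∅) :
    Pairwise (Disjoint on stmtLk ψ L N) := by
  refine (pairwise_disjoint_on _).2 fun j k hjk => disjoint_left.2 fun x hxj hxk => ?_
  obtain ⟨y, hy, hxy⟩ := mem_stmtLk_iff.1 hxj
  obtain ⟨z, hz, hxz⟩ := mem_stmtLk_iff.1 hxk
  set p := (-j).toNat - (-k).toNat
  set q := k.toNat - j.toNat
  have hp : (-j).toNat * N = (-k).toNat * N + p * N := by rw [← add_mul]; congr 1; omega
  have hq : k.toNat * N = j.toNat * N + q * N := by rw [← add_mul]; congr 1; omega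
  rw [hp] at hxy
  rw [hq] at hxz
  have hyz := hinj.eq_iterate_of_iterate_eq hxy hxz
  have hlong : N ≤ p * N + q * N := by
    rw [← add_mul]
    exact Nat.le_mul_of_pos_left N (by omega)
  exact (hrun _ hlong).subset ⟨⟨z, hz, hyz.symm⟩, hy⟩

theorem locallyFinite_stmtLk [LocallyCompactSpace Ω]
    (hsra : ∀ K : Set Ω, IsCompact K → ∃ N : ℕ, ∀ n, N ≤ n → ψ^[n] '' K ∩ K = ∅)
    (hL : IsCompact L) (hN : 1 ≤ N) :
    LocallyFinite (stmtLk ψ L N) := by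
  intro x
  obtain ⟨C, hC, hCx⟩ := exists_compact_mem_nhds x
  obtain ⟨M, hM⟩ := hsra (C ∪ L) (hC.union hL)
  refine ⟨C, hCx, (finite_Ioo (-(M : ℤ)) M).subset ?_⟩
  rintro k ⟨x₀, hx₀k, hx₀C⟩
  have hlt : k.natAbs * N < M := by
    by_contra! hle
    obtain ⟨y, hy, h | h⟩ := exists_iterate_eq_of_mem_stmtLk hx₀k
    · exact (hM _ hle).subset ⟨⟨y, .inr hy, h⟩, .inl hx₀C⟩
    · exact (hM _ hle).subset ⟨⟨x₀, .inl hx₀C, h⟩, .inr hy⟩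
  have : k.natAbs ≤ k.natAbs * N := Nat.le_mul_of_pos_right _ hN
  constructor <;> omega

end StmtLk

/-- (a) the interior of `⋃ L_k` is the union of the interiors; (b) `⋃ L_k` is closed in `Ω`;
(c) the boundary of `⋃ L_k` relative to `Ω` is the union of the boundaries. -/
theorem stmt_11 {d : ℕ} (Ω : Set (Fin d → ℝ)) (hΩ : IsOpen Ω)
    (ψ : ↥Ω → ↥Ω) (hcont : Continuous ψ) (hinj : Function.Injective ψ)
    (hsra : ∀ K : Set ↥Ω, IsCompact K → ∃ N : ℕ, ∀ n, N ≤ n → (ψ^[n] '' K) ∩ K = ∅)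
    (K : Set (Fin d → ℝ)) (hKne : K.Nonempty) (hK : IsCompact K)
    (ρ : ℝ) (hρ : 0 < ρ)
    (hsub : {x : Fin d → ℝ | Metric.infDist x K ≤ ρ} ⊆ Ω)
    (L : Set ↥Ω) (hLdef : L = {x : ↥Ω | Metric.infDist (x : Fin d → ℝ) K ≤ ρ})
    (N : ℕ) (hN : 1 ≤ N)
    (hrun : ∀ n : ℕ, N ≤ n → (ψ^[n] '' L) ∩ L = ∅) :
    interior (⋃ k : ℤ, stmtLk ψ L N k) = ⋃ k : ℤ, interior (stmtLk ψ L N k)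
    ∧ IsClosed (⋃ k : ℤ, stmtLk ψ L N k)
    ∧ frontier (⋃ k : ℤ, stmtLk ψ L N k) = ⋃ k : ℤ, frontier (stmtLk ψ L N k) := by
  have : LocallyCompactSpace Ω := hΩ.locallyCompactSpace
  have hthick : {x : Fin d → ℝ | infDist x K ≤ ρ} = cthickening ρ K :=
    ext fun x => (mem_cthickening_iff_infDist_le hKne hρ.le).symm
  have hL : IsCompact L := by
    rw [Subtype.isCompact_iff, hLdef]
    change IsCompact (Subtype.val '' (Subtype.val ⁻¹' {x | infDist x K ≤ ρ}))
    rw [Subtype.image_preimage_coe, inter_eq_right.2 hsub, hthick]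
    exact hK.cthickening
  have hcl := isClosed_stmtLk (N := N) hcont hL
  have hdisj := pairwise_disjoint_stmtLk hinj hrun
  have hlf := locallyFinite_stmtLk hsra hL hN
  exact ⟨hlf.interior_iUnion_of_pairwise_disjoint hcl hdisj, hlf.isClosed_iUnion hcl,
    hlf.frontier_iUnion_of_pairwise_disjoint hcl hdisj⟩
end

section
/- Let I ⊆ ℝ be a nonempty open interval (i.e., a nonempty open connected subset of ℝ, possibly unbounded), and let ψ : I → I be continuous and injective. Then the following are equivalent: (1) ψ has no fixed points (ψ(x) ≠ x for all x ∈ I); (2) ψ is run-away on I; (3) ψ is strongly run-away on I. -/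
/-!
If `ψ` has no fixed point then, by the intermediate value theorem, either `x < ψ x` for all `x`
or `ψ x < x` for all `x`; by symmetry assume the former. Every orbit is then increasing, and
it cannot stay below a point `b` of `I`: its supremum would lie in `I` and be a fixed point.
Hence the open sets `{x | b < ψⁿ x}` increase to the whole space, and for `b = max K`
compactness of `K` gives one `N` with `ψⁿ(K)` entirely above `K` for all `n ≥ N`.
-/

open Set Filter Topology Function

theorem forall_lt_or_forall_gt_of_forall_ne {X α : Type*} [TopologicalSpace X]
    [PreconnectedSpace X] [LinearOrder α] [TopologicalSpace α] [OrderClosedTopology α]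
    {f g : X → α} (hf : Continuous f) (hg : Continuous g) (hne : ∀ x, f x ≠ g x) :
    (∀ x, f x < g x) ∨ (∀ x, g x < f x) := by
  by_contra! ⟨⟨a, hga⟩, ⟨b, hfb⟩⟩
  obtain ⟨x, hx⟩ := intermediate_value_univ₂ hg hf hga hfb
  exact hne x hx.symm

theorem monotone_iterate_apply_of_forall_le {X : Type*} [Preorder X] {f : X → X}
    (hf : ∀ x, x ≤ f x) (x : X) : Monotone fun n => f^[n] x :=
  monotone_nat_of_le_succ fun n => by
    simpa only [iterate_succ_apply'] using hf (f^[n] x)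

theorem exists_lt_iterate_of_forall_lt {α : Type*} [ConditionallyCompleteLinearOrder α]
    [TopologicalSpace α] [OrderTopology α] {I : Set α} (hI : I.OrdConnected) {f : I → I}
    (hf : Continuous f) (hlt : ∀ x, x < f x) (x b : I) : ∃ n, b < f^[n] x := by
  by_contra! hb
  have hmono : Monotone fun n => (f^[n] x : α) :=
    Subtype.mono_coe _ |>.comp (monotone_iterate_apply_of_forall_le (fun y => (hlt y).le) x)
  have hbdd : BddAbove (range fun n => (f^[n] x : α)) :=
    ⟨b, forall_mem_range.2 fun n => Subtype.coe_le_coe.2 (hb n)⟩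
  set L := ⨆ n, (f^[n] x : α)
  have hL : L ∈ I := hI.out x.2 b.2 ⟨le_ciSup hbdd 0, ciSup_le fun n => hb n⟩
  have htends : Tendsto (fun n => f^[n] x) atTop (𝓝 ⟨L, hL⟩) :=
    tendsto_subtype_rng.2 (tendsto_atTop_ciSup hmono hbdd)
  have hfix : IsFixedPt f ⟨L, hL⟩ := isFixedPt_of_tendsto_iterate htends hf.continuousAt
  exact (hlt _).ne hfix.symm

theorem exists_iterate_image_inter_eq_empty_of_forall_le {X : Type*} [LinearOrder X]
    [TopologicalSpace X] [OrderClosedTopology X] {f : X → X} (hf : Continuous f)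
    (hle : ∀ x, x ≤ f x) (hesc : ∀ x b, ∃ n, b < f^[n] x) {K : Set X} (hK : IsCompact K) :
    ∃ N, ∀ n, N ≤ n → f^[n] '' K ∩ K = ∅ := by
  rcases K.eq_empty_or_nonempty with rfl | hKne
  · exact ⟨0, fun n _ => by simp⟩
  obtain ⟨b, -, hb⟩ := hK.exists_isGreatest hKne
  set U : ℕ → Set X := fun n => {x | b < f^[n] x}
  have hUmono : Monotone U := fun m n hmn x hx =>
    hx.trans_le (monotone_iterate_apply_of_forall_le hle x hmn)
  obtain ⟨N, hN⟩ := hK.elim_directed_cover U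
    (fun n => isOpen_lt continuous_const (hf.iterate n))
    (fun x _ => mem_iUnion.2 (hesc x b)) hUmono.directed_le
  refine ⟨N, fun n hn => eq_empty_iff_forall_notMem.2 ?_⟩
  rintro _ ⟨⟨x, hx, rfl⟩, hxK⟩
  exact (hUmono hn (hN hx)).not_ge (hb hxK)

theorem exists_iterate_image_inter_eq_empty_of_forall_lt {α : Type*}
    [ConditionallyCompleteLinearOrder α] [TopologicalSpace α] [OrderTopology α] {I : Set α}
    (hI : I.OrdConnected) {f : I → I} (hf : Continuous f) (hlt : ∀ x, x < f x) {K : Set I}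
    (hK : IsCompact K) : ∃ N, ∀ n, N ≤ n → f^[n] '' K ∩ K = ∅ :=
  exists_iterate_image_inter_eq_empty_of_forall_le hf (fun x => (hlt x).le)
    (exists_lt_iterate_of_forall_lt hI hf hlt) hK

theorem stmt_12_general (I : Set ℝ) (hconn : IsPreconnected I)
    (ψ : ↥I → ↥I) (hcont : Continuous ψ) :
    List.TFAE [
      ∀ x : ↥I, ψ x ≠ x,
      ∀ K : Set ↥I, IsCompact K → ∃ n : ℕ, 1 ≤ n ∧ (ψ^[n] '' K) ∩ K = ∅,
      ∀ K : Set ↥I, IsCompact K → ∃ N : ℕ, ∀ n, N ≤ n → (ψ^[n] '' K) ∩ K = ∅ ] := by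
  tfae_have 1 → 3 := by
    intro hfree K hK
    have : PreconnectedSpace I := Subtype.preconnectedSpace hconn
    rcases forall_lt_or_forall_gt_of_forall_ne continuous_subtype_val
      (continuous_subtype_val.comp hcont) (fun x h => hfree x (Subtype.ext h.symm)) with
      hup | hdown
    · exact exists_iterate_image_inter_eq_empty_of_forall_lt hconn.ordConnected hcont hup hK
    · exact exists_iterate_image_inter_eq_empty_of_forall_lt (α := ℝᵒᵈ)
        hconn.ordConnected.dual hcont hdown hK
  tfae_have 3 → 2 := fun h K hK =>
    let ⟨N, hN⟩ := h K hK
    ⟨N + 1, N.succ_pos, hN (N + 1) N.le_succ⟩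
  tfae_have 2 → 1 := by
    intro h x hfix
    obtain ⟨n, -, hn⟩ := h {x} isCompact_singleton
    exact hn.subset ⟨⟨x, rfl, iterate_fixed hfix n⟩, rfl⟩
  tfae_finish

/-- For a continuous injective self-map of a nonempty open interval, having no fixed
points, being run-away, and being strongly run-away are equivalent. -/
theorem stmt_12 (I : Set ℝ) (hI : IsOpen I) (hne : I.Nonempty) (hconn : IsPreconnected I)
    (ψ : ↥I → ↥I) (hcont : Continuous ψ) (hinj : Function.Injective ψ) :
    List.TFAE [
      ∀ x : ↥I, ψ x ≠ x,
      ∀ K : Set ↥I, IsCompact K → ∃ n : ℕ, 1 ≤ n ∧ (ψ^[n] '' K) ∩ K = ∅,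
      ∀ K : Set ↥I, IsCompact K → ∃ N : ℕ, ∀ n, N ≤ n → (ψ^[n] '' K) ∩ K = ∅ ] :=
  stmt_12_general I hconn ψ hcont
end

section
/- Let Ω be a topological space and let ψ : Ω → Ω be continuous. The following are equivalent: (i) ψ is strongly run-away; (ii) for every p ≥ 1, the p-th iterate ψ_p is strongly run-away; (iii) for some p ≥ 1, the p-th iterate ψ_p is strongly run-away. -/
/-!
If `ψ` runs away from `K`, so does `ψ_p`, since `(ψ_p)_n = ψ_{pn}`. Conversely, write
`n = p m + r` with `0 ≤ r < p`: then `ψ_n(K) ⊆ (ψ_p)_m(L_r)` and `K ⊆ L_r` for the compact set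
`L_r = K ∪ ψ_r(K)`, so the finitely many run-away conditions of `ψ_p` on the `L_r` give the one
of `ψ` on `K`.
-/

open Filter

theorem Nat.eventually_div_mod_of_forall_lt {p : ℕ} (hp : 0 < p) {P : ℕ → ℕ → Prop}
    (hP : ∀ r < p, ∀ᶠ m in atTop, P r m) : ∀ᶠ n in atTop, P (n % p) (n / p) := by
  have hall : ∀ᶠ m in atTop, ∀ r ∈ Finset.range p, P r m :=
    (eventually_all_finset _).2 fun r hr => hP r (Finset.mem_range.1 hr)
  filter_upwards [(Nat.tendsto_div_const_atTop hp.ne').eventually hall] with n hn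
  exact hn _ (Finset.mem_range.2 (Nat.mod_lt n hp))

section

variable {Ω : Type*} [TopologicalSpace Ω]

def IsStronglyRunAway (ψ : Ω → Ω) : Prop :=
  ∀ K : Set Ω, IsCompact K → ∃ N : ℕ, ∀ n, N ≤ n → (ψ^[n] '' K) ∩ K = ∅

theorem isStronglyRunAway_iff_eventually {ψ : Ω → Ω} :
    IsStronglyRunAway ψ ↔ ∀ K : Set Ω, IsCompact K → ∀ᶠ n in atTop, ψ^[n] '' K ∩ K = ∅ := by
  simp only [IsStronglyRunAway, eventually_atTop]

theorem IsStronglyRunAway.iterate {ψ : Ω → Ω} (h : IsStronglyRunAway ψ) {p : ℕ} (hp : 0 < p) :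
    IsStronglyRunAway ψ^[p] := by
  rw [isStronglyRunAway_iff_eventually] at h ⊢
  intro K hK
  have hmul : Tendsto (p * ·) atTop atTop :=
    tendsto_atTop_mono (fun n => Nat.le_mul_of_pos_left n hp) tendsto_id
  simpa only [Function.iterate_mul] using hmul.eventually (h K hK)

theorem IsStronglyRunAway.of_iterate {ψ : Ω → Ω} (hψ : Continuous ψ) {p : ℕ} (hp : 0 < p)
    (h : IsStronglyRunAway ψ^[p]) : IsStronglyRunAway ψ := by
  rw [isStronglyRunAway_iff_eventually] at h ⊢
  intro K hK
  let L : ℕ → Set Ω := fun r => K ∪ ψ^[r] '' K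
  have hL : ∀ r < p, ∀ᶠ m in atTop, (ψ^[p])^[m] '' L r ∩ L r = ∅ :=
    fun r _ => h (L r) (hK.union (hK.image (hψ.iterate r)))
  filter_upwards [Nat.eventually_div_mod_of_forall_lt hp hL] with n hn
  have hsplit : ψ^[n] '' K = (ψ^[p])^[n / p] '' (ψ^[n % p] '' K) := by
    rw [← Set.image_comp, ← Function.iterate_mul, ← Function.iterate_add, Nat.div_add_mod]
  refine Set.subset_eq_empty (Set.inter_subset_inter ?_ Set.subset_union_left) hn
  exact hsplit ▸ Set.image_mono Set.subset_union_right

end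

/-- A continuous self-map `ψ` of a topological space is strongly run-away iff every
iterate `ψ_p` (`p ≥ 1`) is strongly run-away, iff some iterate `ψ_p` (`p ≥ 1`) is
strongly run-away. -/
theorem stmt_14 {Ω : Type*} [TopologicalSpace Ω] (ψ : Ω → Ω) (hψ : Continuous ψ) :
    List.TFAE [
      ∀ K : Set Ω, IsCompact K → ∃ N : ℕ, ∀ n, N ≤ n → (ψ^[n] '' K) ∩ K = ∅,
      ∀ p : ℕ, 1 ≤ p →
        ∀ K : Set Ω, IsCompact K → ∃ N : ℕ, ∀ n, N ≤ n → ((ψ^[p])^[n] '' K) ∩ K = ∅,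
      ∃ p : ℕ, 1 ≤ p ∧
        ∀ K : Set Ω, IsCompact K → ∃ N : ℕ, ∀ n, N ≤ n → ((ψ^[p])^[n] '' K) ∩ K = ∅ ] := by
  change List.TFAE [IsStronglyRunAway ψ, ∀ p : ℕ, 1 ≤ p → IsStronglyRunAway ψ^[p],
    ∃ p : ℕ, 1 ≤ p ∧ IsStronglyRunAway ψ^[p]]
  tfae_have 1 → 2 := fun h _ hp => h.iterate hp
  tfae_have 2 → 3 := fun h => ⟨1, le_rfl, h 1 le_rfl⟩
  tfae_have 3 → 1 := fun ⟨_, hp, h⟩ => h.of_iterate hψ hp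
  tfae_finish
end

section
/- Let Ω = I_1 ∪ … ∪ I_m, where I_1, …, I_m are pairwise disjoint nonempty open intervals in ℝ, and let ψ : Ω → Ω be injective and continuous. Then the following are equivalent: (1) ψ has no periodic points of period at most m, i.e., ψ_k(x) ≠ x for every x ∈ Ω and every k with 1 ≤ k ≤ m; (2) ψ is run-away; (3) ψ is strongly run-away. -/
open Set Function Filter Topology

private lemma runaway_escape_up (Ω : Set ℝ) (h : ↥Ω → ↥Ω) (hc : Continuous h)
    (S : Set ↥Ω) (hoc : (Subtype.val '' S : Set ℝ).OrdConnected)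
    (hmaps : ∀ x ∈ S, h x ∈ S) (hup : ∀ x ∈ S, (x : ℝ) < (h x : ℝ))
    (C C' : Set ↥Ω) (hC : IsCompact C) (hC' : IsCompact C')
    (hCS : C ⊆ S) (hC'S : C' ⊆ S) :
    ∃ N : ℕ, ∀ n, N ≤ n → (h^[n] '' C) ∩ C' = ∅ := by
  rcases C.eq_empty_or_nonempty with hCe | hCne
  · exact ⟨0, fun n _ => by simp [hCe]⟩
  rcases C'.eq_empty_or_nonempty with hC'e | hC'ne
  · exact ⟨0, fun n _ => by simp [hC'e]⟩
  have orbit : ∀ n : ℕ, ∀ x ∈ S, h^[n] x ∈ S := by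
    intro n
    induction n with
    | zero => intro x hx; simpa using hx
    | succ n ih =>
      intro x hx
      rw [Function.iterate_succ_apply']
      exact hmaps _ (ih x hx)
  have step : ∀ x ∈ S, ∀ n : ℕ, ((h^[n] x : ℝ)) < (h^[n+1] x : ℝ) := by
    intro x hx n
    rw [Function.iterate_succ_apply']
    exact hup _ (orbit n x hx)
  have mono : ∀ x ∈ S, StrictMono fun n : ℕ => (h^[n] x : ℝ) :=
    fun x hx => strictMono_nat_of_lt_succ (step x hx)
  set b' : ℝ := sSup (Subtype.val '' C') with hb'
  have hC'img : IsCompact (Subtype.val '' C') := hC'.image continuous_subtype_val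
  have hb'mem : b' ∈ Subtype.val '' C' := hC'img.sSup_mem (hC'ne.image _)
  have hb'ub : ∀ y ∈ C', (y : ℝ) ≤ b' := fun y hy => le_csSup hC'img.bddAbove ⟨y, hy, rfl⟩
  have key : ∃ N : ℕ, ∀ x ∈ C, b' < (h^[N] x : ℝ) := by
    by_contra hcon
    push_neg at hcon
    set D : ℕ → Set ↥Ω := fun n => {x ∈ C | (h^[n] x : ℝ) ≤ b'} with hD
    have hDsub : ∀ n, D (n + 1) ⊆ D n := fun n x hx =>
      ⟨hx.1, le_of_lt (lt_of_lt_of_le (step x (hCS hx.1) n) hx.2)⟩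
    have hDne : ∀ n, (D n).Nonempty := by
      intro n
      obtain ⟨x, hx, hxle⟩ := hcon n
      exact ⟨x, hx, hxle⟩
    have hDcl : ∀ n, IsClosed (D n) := by
      intro n
      have heq : D n = C ∩ ((fun x : ↥Ω => (h^[n] x : ℝ)) ⁻¹' Set.Iic b') := rfl
      rw [heq]
      exact hC.isClosed.inter
        (IsClosed.preimage (continuous_subtype_val.comp (hc.iterate n)) isClosed_Iic)
    have hD0 : IsCompact (D 0) := hC.of_isClosed_subset (hDcl 0) (fun x hx => hx.1)
    obtain ⟨x₀, hx₀⟩ :=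
      IsCompact.nonempty_iInter_of_sequence_nonempty_isCompact_isClosed D hDsub hDne hD0 hDcl
    simp only [Set.mem_iInter] at hx₀
    have hx₀C : x₀ ∈ C := (hx₀ 0).1
    have hx₀S : x₀ ∈ S := hCS hx₀C
    have hbdd : ∀ n : ℕ, (h^[n] x₀ : ℝ) ≤ b' := fun n => (hx₀ n).2
    set a : ℕ → ℝ := fun n => (h^[n] x₀ : ℝ) with ha
    have hmono : Monotone a := (mono x₀ hx₀S).monotone
    have hbdd' : BddAbove (Set.range a) := ⟨b', by rintro _ ⟨n, rfl⟩; exact hbdd n⟩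
    set L : ℝ := ⨆ n, a n with hLdef
    have hTend : Filter.Tendsto a Filter.atTop (nhds L) := tendsto_atTop_ciSup hmono hbdd'
    have hLle : L ≤ b' := ciSup_le hbdd
    have haL : a 0 ≤ L := le_ciSup hbdd' 0
    have hLmem : L ∈ Subtype.val '' S := by
      have h0 : a 0 ∈ Subtype.val '' S := ⟨x₀, hx₀S, by simp [ha]⟩
      have hb'S : b' ∈ Subtype.val '' S := by
        obtain ⟨y, hy, hyv⟩ := hb'mem
        exact ⟨y, hC'S hy, hyv⟩
      exact hoc.out h0 hb'S ⟨haL, hLle⟩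
    obtain ⟨z, hzS, hzL⟩ := hLmem
    have hTendz : Filter.Tendsto (fun n => h^[n] x₀) Filter.atTop (nhds z) := by
      rw [tendsto_subtype_rng]
      simpa [hzL] using hTend
    have h1 : Filter.Tendsto (fun n => h (h^[n] x₀)) Filter.atTop (nhds (h z)) :=
      (hc.tendsto z).comp hTendz
    have h2 : Filter.Tendsto (fun n => (h (h^[n] x₀) : ℝ)) Filter.atTop (nhds L) := by
      have heq : (fun n => (h (h^[n] x₀) : ℝ)) = fun n => a (n + 1) := by
        funext n
        simp [ha, Function.iterate_succ_apply']
      rw [heq]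
      exact hTend.comp (Filter.tendsto_add_atTop_nat 1)
    have h3 : ((h z : ℝ)) = L :=
      tendsto_nhds_unique ((continuous_subtype_val.tendsto _).comp h1) h2
    have h4 := hup z hzS
    rw [h3, hzL] at h4
    exact lt_irrefl _ h4
  obtain ⟨N, hN⟩ := key
  refine ⟨N, fun n hn => ?_⟩
  rw [Set.eq_empty_iff_forall_notMem]
  rintro x ⟨⟨y, hyC, rfl⟩, hxC'⟩
  have h1 : b' < (h^[N] y : ℝ) := hN y hyC
  have h2 : (h^[N] y : ℝ) ≤ (h^[n] y : ℝ) := (mono y (hCS hyC)).monotone hn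
  exact absurd (hb'ub _ hxC') (not_le.mpr (lt_of_lt_of_le h1 h2))

private lemma runaway_escape_down (Ω : Set ℝ) (h : ↥Ω → ↥Ω) (hc : Continuous h)
    (S : Set ↥Ω) (hoc : (Subtype.val '' S : Set ℝ).OrdConnected)
    (hmaps : ∀ x ∈ S, h x ∈ S) (hdown : ∀ x ∈ S, (h x : ℝ) < (x : ℝ))
    (C C' : Set ↥Ω) (hC : IsCompact C) (hC' : IsCompact C')
    (hCS : C ⊆ S) (hC'S : C' ⊆ S) :
    ∃ N : ℕ, ∀ n, N ≤ n → (h^[n] '' C) ∩ C' = ∅ := by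
  rcases C.eq_empty_or_nonempty with hCe | hCne
  · exact ⟨0, fun n _ => by simp [hCe]⟩
  rcases C'.eq_empty_or_nonempty with hC'e | hC'ne
  · exact ⟨0, fun n _ => by simp [hC'e]⟩
  have orbit : ∀ n : ℕ, ∀ x ∈ S, h^[n] x ∈ S := by
    intro n
    induction n with
    | zero => intro x hx; simpa using hx
    | succ n ih =>
      intro x hx
      rw [Function.iterate_succ_apply']
      exact hmaps _ (ih x hx)
  have step : ∀ x ∈ S, ∀ n : ℕ, ((h^[n+1] x : ℝ)) < (h^[n] x : ℝ) := by
    intro x hx n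
    rw [Function.iterate_succ_apply']
    exact hdown _ (orbit n x hx)
  have mono : ∀ x ∈ S, StrictAnti fun n : ℕ => (h^[n] x : ℝ) :=
    fun x hx => strictAnti_nat_of_succ_lt (step x hx)
  set b' : ℝ := sInf (Subtype.val '' C') with hb'
  have hC'img : IsCompact (Subtype.val '' C') := hC'.image continuous_subtype_val
  have hb'mem : b' ∈ Subtype.val '' C' := hC'img.sInf_mem (hC'ne.image _)
  have hb'lb : ∀ y ∈ C', b' ≤ (y : ℝ) := fun y hy => csInf_le hC'img.bddBelow ⟨y, hy, rfl⟩
  have key : ∃ N : ℕ, ∀ x ∈ C, (h^[N] x : ℝ) < b' := by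
    by_contra hcon
    push_neg at hcon
    set D : ℕ → Set ↥Ω := fun n => {x ∈ C | b' ≤ (h^[n] x : ℝ)} with hD
    have hDsub : ∀ n, D (n + 1) ⊆ D n := fun n x hx =>
      ⟨hx.1, le_of_lt (lt_of_le_of_lt hx.2 (step x (hCS hx.1) n))⟩
    have hDne : ∀ n, (D n).Nonempty := by
      intro n
      obtain ⟨x, hx, hxle⟩ := hcon n
      exact ⟨x, hx, hxle⟩
    have hDcl : ∀ n, IsClosed (D n) := by
      intro n
      have heq : D n = C ∩ ((fun x : ↥Ω => (h^[n] x : ℝ)) ⁻¹' Set.Ici b') := rfl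
      rw [heq]
      exact hC.isClosed.inter
        (IsClosed.preimage (continuous_subtype_val.comp (hc.iterate n)) isClosed_Ici)
    have hD0 : IsCompact (D 0) := hC.of_isClosed_subset (hDcl 0) (fun x hx => hx.1)
    obtain ⟨x₀, hx₀⟩ :=
      IsCompact.nonempty_iInter_of_sequence_nonempty_isCompact_isClosed D hDsub hDne hD0 hDcl
    simp only [Set.mem_iInter] at hx₀
    have hx₀C : x₀ ∈ C := (hx₀ 0).1
    have hx₀S : x₀ ∈ S := hCS hx₀C
    have hbdd : ∀ n : ℕ, b' ≤ (h^[n] x₀ : ℝ) := fun n => (hx₀ n).2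
    set a : ℕ → ℝ := fun n => (h^[n] x₀ : ℝ) with ha
    have hmono : Antitone a := (mono x₀ hx₀S).antitone
    have hbdd' : BddBelow (Set.range a) := ⟨b', by rintro _ ⟨n, rfl⟩; exact hbdd n⟩
    set L : ℝ := ⨅ n, a n with hLdef
    have hTend : Filter.Tendsto a Filter.atTop (nhds L) := tendsto_atTop_ciInf hmono hbdd'
    have hLle : b' ≤ L := le_ciInf hbdd
    have haL : L ≤ a 0 := ciInf_le hbdd' 0
    have hLmem : L ∈ Subtype.val '' S := by
      have h0 : a 0 ∈ Subtype.val '' S := ⟨x₀, hx₀S, by simp [ha]⟩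
      have hb'S : b' ∈ Subtype.val '' S := by
        obtain ⟨y, hy, hyv⟩ := hb'mem
        exact ⟨y, hC'S hy, hyv⟩
      exact hoc.out hb'S h0 ⟨hLle, haL⟩
    obtain ⟨z, hzS, hzL⟩ := hLmem
    have hTendz : Filter.Tendsto (fun n => h^[n] x₀) Filter.atTop (nhds z) := by
      rw [tendsto_subtype_rng]
      simpa [hzL] using hTend
    have h1 : Filter.Tendsto (fun n => h (h^[n] x₀)) Filter.atTop (nhds (h z)) :=
      (hc.tendsto z).comp hTendz
    have h2 : Filter.Tendsto (fun n => (h (h^[n] x₀) : ℝ)) Filter.atTop (nhds L) := by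
      have heq : (fun n => (h (h^[n] x₀) : ℝ)) = fun n => a (n + 1) := by
        funext n
        simp [ha, Function.iterate_succ_apply']
      rw [heq]
      exact hTend.comp (Filter.tendsto_add_atTop_nat 1)
    have h3 : ((h z : ℝ)) = L :=
      tendsto_nhds_unique ((continuous_subtype_val.tendsto _).comp h1) h2
    have h4 := hdown z hzS
    rw [h3, hzL] at h4
    exact lt_irrefl _ h4
  obtain ⟨N, hN⟩ := key
  refine ⟨N, fun n hn => ?_⟩
  rw [Set.eq_empty_iff_forall_notMem]
  rintro x ⟨⟨y, hyC, rfl⟩, hxC'⟩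
  have h1 : (h^[N] y : ℝ) < b' := hN y hyC
  have h2 : (h^[n] y : ℝ) ≤ (h^[N] y : ℝ) := (mono y (hCS hyC)).antitone hn
  exact absurd (hb'lb _ hxC') (not_le.mpr (lt_of_le_of_lt h2 h1))

private lemma no_period_two (Ω : Set ℝ) (g : ↥Ω → ↥Ω) (hg : Continuous g)
    (S : Set ↥Ω) (hoc : (Subtype.val '' S : Set ℝ).OrdConnected)
    (hmaps : ∀ x ∈ S, g x ∈ S) (hfix : ∀ x ∈ S, g x ≠ x) :
    ∀ x ∈ S, g (g x) ≠ x := by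
  have aux : ∀ a b : ↥Ω, a ∈ S → b ∈ S → (a : ℝ) < (b : ℝ) → g a = b → g b = a → False := by
    intro a b haS hbS hab h1 h2
    classical
    have hsub : Set.Icc (a : ℝ) (b : ℝ) ⊆ Subtype.val '' S :=
      hoc.out ⟨a, haS, rfl⟩ ⟨b, hbS, rfl⟩
    have hsubΩ : Set.Icc (a : ℝ) (b : ℝ) ⊆ Ω := fun t ht => by
      obtain ⟨z, _, rfl⟩ := hsub ht
      exact z.2
    set f : ℝ → ℝ := fun t => if h : t ∈ Ω then ((g ⟨t, h⟩ : ℝ) - t) else 0 with hf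
    have hfc : ContinuousOn f (Set.Icc (a : ℝ) (b : ℝ)) := by
      rw [continuousOn_iff_continuous_restrict]
      have heq : (Set.Icc (a : ℝ) (b : ℝ)).domRestrict f =
          fun t : Set.Icc (a : ℝ) (b : ℝ) => ((g ⟨(t : ℝ), hsubΩ t.2⟩ : ℝ) - (t : ℝ)) := by
        funext t
        simp only [Set.domRestrict_apply, hf]
        rw [dif_pos (hsubΩ t.2)]
      rw [heq]
      exact (continuous_subtype_val.comp
        (hg.comp (Continuous.subtype_mk continuous_subtype_val _))).sub continuous_subtype_val
    have hfa : f (a : ℝ) = (b : ℝ) - (a : ℝ) := by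
      simp only [hf]
      rw [dif_pos a.2, Subtype.coe_eta, h1]
    have hfb : f (b : ℝ) = (a : ℝ) - (b : ℝ) := by
      simp only [hf]
      rw [dif_pos b.2, Subtype.coe_eta, h2]
    have h0 : (0 : ℝ) ∈ Set.Icc (f (b : ℝ)) (f (a : ℝ)) := by
      constructor
      · rw [hfb]; linarith
      · rw [hfa]; linarith
    obtain ⟨t, htI, hft⟩ := intermediate_value_Icc' hab.le hfc h0
    obtain ⟨z, hzS, hzt⟩ := hsub htI
    have hftz : f t = (g z : ℝ) - (z : ℝ) := by
      simp only [hf]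
      rw [dif_pos (hsubΩ htI)]
      subst hzt
      rw [Subtype.coe_eta]
    rw [hftz] at hft
    have : (g z : ℝ) = (z : ℝ) := by linarith
    exact hfix z hzS (Subtype.ext this)
  intro x hxS hgg
  rcases lt_trichotomy (x : ℝ) ((g x : ℝ)) with hlt | heq | hgt
  · exact aux x (g x) hxS (hmaps x hxS) hlt rfl hgg
  · exact hfix x hxS (Subtype.ext heq.symm)
  · exact aux (g x) x (hmaps x hxS) hxS hgt hgg rfl

private lemma interval_escape (Ω : Set ℝ) (g : ↥Ω → ↥Ω) (hg : Continuous g)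
    (S : Set ↥Ω) (hSpre : IsPreconnected S)
    (hoc : (Subtype.val '' S : Set ℝ).OrdConnected)
    (hmaps : ∀ x ∈ S, g x ∈ S) (hfix : ∀ x ∈ S, g x ≠ x)
    (C C' : Set ↥Ω) (hC : IsCompact C) (hC' : IsCompact C')
    (hCS : C ⊆ S) (hC'S : C' ⊆ S) :
    ∃ N : ℕ, ∀ n, N ≤ n → (g^[n] '' C) ∩ C' = ∅ := by
  have hmaps2 : ∀ x ∈ S, g (g x) ∈ S := fun x hx => hmaps _ (hmaps _ hx)
  have hne2 : ∀ x ∈ S, g (g x) ≠ x := no_period_two Ω g hg S hoc hmaps hfix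
  set u : ↥Ω → ℝ := fun x => (g (g x) : ℝ) - (x : ℝ) with hu
  have huc : Continuous u :=
    (continuous_subtype_val.comp (hg.comp hg)).sub continuous_subtype_val
  have hune : ∀ x ∈ S, u x ≠ 0 := fun x hx h =>
    hne2 x hx (Subtype.ext (by simpa [hu, sub_eq_zero] using h))
  have hsign : (∀ x ∈ S, 0 < u x) ∨ (∀ x ∈ S, u x < 0) := by
    by_cases hall : ∀ x ∈ S, 0 < u x
    · exact Or.inl hall
    · push_neg at hall
      obtain ⟨x, hxS, hxle⟩ := hall
      have hxneg : u x < 0 := lt_of_le_of_ne hxle (hune x hxS)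
      refine Or.inr fun y hyS => ?_
      rcases lt_or_ge (u y) 0 with hy | hy
      · exact hy
      · exfalso
        have hypos : 0 < u y := lt_of_le_of_ne hy (Ne.symm (hune y hyS))
        have himg : IsPreconnected (u '' S) := hSpre.image u huc.continuousOn
        have h0m : (0 : ℝ) ∈ u '' S :=
          himg.ordConnected.out ⟨x, hxS, rfl⟩ ⟨y, hyS, rfl⟩ ⟨hxneg.le, hypos.le⟩
        obtain ⟨w, hwS, hw0⟩ := h0m
        exact hune w hwS hw0
  have hgC : IsCompact (g '' C) := hC.image hg
  have hgCS : g '' C ⊆ S := by rintro _ ⟨x, hx, rfl⟩; exact hmaps x (hCS hx)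
  set D := C ∪ g '' C with hD
  have hDcp : IsCompact D := hC.union hgC
  have hDS : D ⊆ S := Set.union_subset hCS hgCS
  have hg2 : g^[2] = g ∘ g := by
    funext x
    show g^[1+1] x = g (g x)
    rw [Function.iterate_add_apply]
    simp
  have hgg2 : ∀ k : ℕ, (g ∘ g)^[k] = g^[2 * k] := by
    intro k
    rw [Function.iterate_mul, hg2]
  have main : ∃ M : ℕ, ∀ k, M ≤ k → ((g ∘ g)^[k] '' D) ∩ C' = ∅ := by
    rcases hsign with hpos | hneg
    · exact runaway_escape_up Ω (g ∘ g) (hg.comp hg) S hoc hmaps2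
        (fun x hx => by have := hpos x hx; simp only [hu] at this; simp only [Function.comp_apply]; linarith)
        D C' hDcp hC' hDS hC'S
    · exact runaway_escape_down Ω (g ∘ g) (hg.comp hg) S hoc hmaps2
        (fun x hx => by have := hneg x hx; simp only [hu] at this; simp only [Function.comp_apply]; linarith)
        D C' hDcp hC' hDS hC'S
  obtain ⟨M, hM⟩ := main
  refine ⟨2 * M + 1, fun n hn => ?_⟩
  have hsub : g^[n] '' C ⊆ (g ∘ g)^[n / 2] '' D := by
    rcases Nat.even_or_odd n with ⟨k, hk⟩ | ⟨k, hk⟩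
    · have hn2 : n / 2 = k := by omega
      have hit : g^[n] = (g ∘ g)^[k] := by
        have h : n = 2 * k := by omega
        rw [h, hgg2 k]
      rw [hn2, hit]
      exact Set.image_mono Set.subset_union_left
    · have hn2 : n / 2 = k := by omega
      have hit : g^[n] = (g ∘ g)^[k] ∘ g := by
        have h : n = 2 * k + 1 := by omega
        rw [h, Function.iterate_succ, hgg2 k]
      rw [hn2, hit, Set.image_comp]
      exact Set.image_mono (Set.image_subset_iff.mpr (fun x hx => Set.subset_union_right ⟨x, hx, rfl⟩))
  have hMn : M ≤ n / 2 := (Nat.le_div_iff_mul_le (by norm_num)).mpr (by omega)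
  have hempty := hM (n / 2) hMn
  rw [Set.eq_empty_iff_forall_notMem] at hempty ⊢
  rintro x ⟨hx1, hx2⟩
  exact hempty x ⟨hsub hx1, hx2⟩

private lemma connected_in_union {m : ℕ} (I : Fin m → Set ℝ) (hopen : ∀ j, IsOpen (I j))
    (hdisj : ∀ i j, i ≠ j → I i ∩ I j = ∅) (A : Set ℝ) (hA : IsPreconnected A)
    (hAsub : A ⊆ ⋃ j, I j) (c : Fin m) (hc : (A ∩ I c).Nonempty) : A ⊆ I c := by
  by_contra hcon
  obtain ⟨y, hyA, hyc⟩ := Set.not_subset.mp hcon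
  have hyv : y ∈ ⋃ k, ⋃ (_ : k ≠ c), I k := by
    obtain ⟨k, hk⟩ := Set.mem_iUnion.mp (hAsub hyA)
    exact Set.mem_iUnion.mpr ⟨k, Set.mem_iUnion.mpr ⟨fun h => hyc (h ▸ hk), hk⟩⟩
  have hcover : A ⊆ I c ∪ ⋃ k, ⋃ (_ : k ≠ c), I k := by
    intro x hx
    obtain ⟨k, hk⟩ := Set.mem_iUnion.mp (hAsub hx)
    by_cases hkc : k = c
    · exact Or.inl (hkc ▸ hk)
    · exact Or.inr (Set.mem_iUnion.mpr ⟨k, Set.mem_iUnion.mpr ⟨hkc, hk⟩⟩)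
  obtain ⟨z, hzA, hz1, hz2⟩ := hA (I c) (⋃ k, ⋃ (_ : k ≠ c), I k) (hopen c)
    (isOpen_iUnion fun k => isOpen_iUnion fun _ => hopen k) hcover hc ⟨y, hyA, hyv⟩
  obtain ⟨k, hk⟩ := Set.mem_iUnion.mp hz2
  obtain ⟨hkc, hzk⟩ := Set.mem_iUnion.mp hk
  have h0 := hdisj c k (Ne.symm hkc)
  rw [Set.eq_empty_iff_forall_notMem] at h0
  exact h0 z ⟨hz1, hzk⟩

/-- For an injective continuous self-map `ψ` of a union of `m` pairwise disjoint nonempty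
open intervals, the following are equivalent: (1) `ψ` has no periodic points of period at
most `m`; (2) `ψ` is run-away; (3) `ψ` is strongly run-away. -/
theorem stmt_16 (m : ℕ) (hm : 1 ≤ m) (I : Fin m → Set ℝ)
    (hopen : ∀ j, IsOpen (I j)) (hne : ∀ j, (I j).Nonempty)
    (hconn : ∀ j, IsPreconnected (I j))
    (hdisj : ∀ i j, i ≠ j → I i ∩ I j = ∅)
    (Ω : Set ℝ) (hΩ : Ω = ⋃ j, I j)
    (ψ : ↥Ω → ↥Ω) (hinj : Function.Injective ψ) (hcont : Continuous ψ) :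
    List.TFAE [
      ∀ x : ↥Ω, ∀ k : ℕ, 1 ≤ k → k ≤ m → ψ^[k] x ≠ x,
      ∀ K : Set ↥Ω, IsCompact K → ∃ n : ℕ, 1 ≤ n ∧ (ψ^[n] '' K) ∩ K = ∅,
      ∀ K : Set ↥Ω, IsCompact K → ∃ N : ℕ, ∀ n, N ≤ n → (ψ^[n] '' K) ∩ K = ∅ ] := by
  tfae_have 1 → 3 := by
    intro h1 K hK
    have hIsub : ∀ j, I j ⊆ Ω := fun j => by rw [hΩ]; exact Set.subset_iUnion I j
    set S : Fin m → Set ↥Ω := fun j => Subtype.val ⁻¹' (I j) with hS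
    have hSval : ∀ j, Subtype.val '' S j = I j := by
      intro j
      apply Set.Subset.antisymm
      · rintro _ ⟨x, hx, rfl⟩; exact hx
      · intro t ht; exact ⟨⟨t, hIsub j ht⟩, ht, rfl⟩
    have hSopen : ∀ j, IsOpen (S j) := fun j => (hopen j).preimage continuous_subtype_val
    have hSpre : ∀ j, IsPreconnected (S j) := by
      intro j
      refine IsInducing.subtypeVal.isPreconnected_image.mp ?_
      rw [hSval j]
      exact hconn j
    have hmemΩ : ∀ x : ↥Ω, ∃ j, x ∈ S j := by
      intro x
      have hx : (x : ℝ) ∈ ⋃ j, I j := (Set.ext_iff.mp hΩ (x : ℝ)).mp x.2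
      simpa [hS] using hx
    have huniq : ∀ (x : ↥Ω) i j, x ∈ S i → x ∈ S j → i = j := by
      intro x i j hi hj
      by_contra hne'
      have h0 := hdisj i j hne'
      rw [Set.eq_empty_iff_forall_notMem] at h0
      exact h0 x ⟨hi, hj⟩
    have hσex : ∀ j, ∃ c, ∀ x ∈ S j, ψ x ∈ S c := by
      intro j
      have hne' : (S j).Nonempty := by
        obtain ⟨t, ht⟩ := hne j
        exact ⟨⟨t, hIsub j ht⟩, ht⟩
      set A : Set ℝ := Subtype.val '' (ψ '' S j) with hA
      have hApre : IsPreconnected A :=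
        (((hSpre j).image ψ hcont.continuousOn).image _ continuous_subtype_val.continuousOn)
      have hAsub : A ⊆ ⋃ k, I k := by
        rintro _ ⟨y, hy, rfl⟩
        rw [← hΩ]
        exact y.2
      obtain ⟨x0, hx0⟩ := hne'
      obtain ⟨c, hc⟩ := hmemΩ (ψ x0)
      have hsub := connected_in_union I hopen hdisj A hApre hAsub c
        ⟨↑(ψ x0), ⟨ψ x0, ⟨x0, hx0, rfl⟩, rfl⟩, hc⟩
      exact ⟨c, fun x hx => hsub ⟨ψ x, ⟨x, hx, rfl⟩, rfl⟩⟩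
    choose σ hσ using hσex
    have horb : ∀ (n : ℕ) (j) (x : ↥Ω), x ∈ S j → ψ^[n] x ∈ S (σ^[n] j) := by
      intro n
      induction n with
      | zero => intro j x hx; simpa using hx
      | succ n ih =>
        intro j x hx
        rw [Function.iterate_succ_apply', Function.iterate_succ_apply']
        exact hσ _ _ (ih j x hx)
    have hSclosed : ∀ j, IsClosed (S j) := by
      intro j
      rw [← isOpen_compl_iff]
      have hco : (S j)ᶜ = ⋃ k, ⋃ (_ : k ≠ j), S k := by
        ext x
        simp only [Set.mem_compl_iff, Set.mem_iUnion]
        constructor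
        · intro hx
          obtain ⟨c, hc⟩ := hmemΩ x
          exact ⟨c, fun h => hx (h ▸ hc), hc⟩
        · rintro ⟨k, hk, hxk⟩ hxj
          exact hk (huniq x k j hxk hxj)
      rw [hco]
      exact isOpen_iUnion fun k => isOpen_iUnion fun _ => hSopen k
    set Kp : Fin m → Set ↥Ω := fun j => K ∩ S j with hKp
    have hKpc : ∀ j, IsCompact (Kp j) := fun j => hK.inter_right (hSclosed j)
    have hKpS : ∀ j, Kp j ⊆ S j := fun j => Set.inter_subset_right
    have pair : ∀ i j : Fin m, ∃ N : ℕ, ∀ n, N ≤ n → (ψ^[n] '' Kp i) ∩ Kp j = ∅ := by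
      intro i j
      obtain ⟨p, q, hpq, hqm, hper0⟩ : ∃ p q : ℕ, p < q ∧ q ≤ m ∧ σ^[p] i = σ^[q] i := by
        obtain ⟨a, b, hab, h⟩ := Fintype.exists_ne_map_eq_of_card_lt
          (fun n : Fin (m + 1) => σ^[(n : ℕ)] i) (by simp)
        rcases lt_or_gt_of_ne hab with hlt | hgt
        · exact ⟨a, b, hlt, Nat.lt_succ_iff.mp b.2, h⟩
        · exact ⟨b, a, hgt, Nat.lt_succ_iff.mp a.2, h.symm⟩
      set d := q - p with hd
      have hd1 : 1 ≤ d := by omega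
      have hdm : d ≤ m := by omega
      have hper : ∀ t : ℕ, σ^[p + d + t] i = σ^[p + t] i := by
        intro t
        have hq : p + d = q := by omega
        rw [hq, add_comm q t, add_comm p t, Function.iterate_add_apply,
          Function.iterate_add_apply, hper0]
      have hper2 : ∀ t k : ℕ, σ^[p + t + k * d] i = σ^[p + t] i := by
        intro t k
        induction k with
        | zero => simp
        | succ k ih =>
          have he : p + t + (k + 1) * d = p + d + (t + k * d) := by ring
          rw [he, hper (t + k * d), ← add_assoc]
          exact ih
      have hred : ∀ n, p ≤ n → σ^[n] i = σ^[p + (n - p) % d] i := by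
        intro n hn
        have h1 : p + ((n - p) % d + (n - p) / d * d) = n := by
          rw [Nat.mod_add_div', Nat.add_sub_cancel' hn]
        calc σ^[n] i = σ^[p + (n - p) % d + (n - p) / d * d] i := by rw [add_assoc, h1]
          _ = σ^[p + (n - p) % d] i := hper2 _ _
      by_cases hex : ∃ r : ℕ, r < d ∧ σ^[p + r] i = j
      · obtain ⟨r0, hr0d, hr0⟩ := hex
        have hcyc : σ^[d] j = j := by
          have he : d + (p + r0) = p + r0 + 1 * d := by ring
          rw [← hr0, ← Function.iterate_add_apply, he, hper2 r0 1, hr0]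
        have hfree : ∀ x ∈ S j, ψ^[d] x ≠ x := fun x _ => h1 x d hd1 hdm
        have hmapsd : ∀ x ∈ S j, ψ^[d] x ∈ S j := fun x hx => hcyc ▸ horb d j x hx
        have hocj : (Subtype.val '' S j : Set ℝ).OrdConnected := by
          rw [hSval j]
          exact (hconn j).ordConnected
        have hIE := interval_escape Ω (ψ^[d]) (hcont.iterate d) (S j) (hSpre j) hocj
          hmapsd hfree
        have hMex : ∀ r : ℕ, ∃ M : ℕ, σ^[p + r] i = j →
            ∀ k, M ≤ k → ((ψ^[d])^[k] '' (ψ^[p + r] '' Kp i)) ∩ Kp j = ∅ := by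
          intro r
          by_cases hr : σ^[p + r] i = j
          · obtain ⟨M, hM⟩ := hIE (ψ^[p + r] '' Kp i) (Kp j)
              ((hKpc i).image (hcont.iterate _)) (hKpc j)
              (by rintro _ ⟨y, hy, rfl⟩; rw [← hr]; exact horb _ i y hy.2) (hKpS j)
            exact ⟨M, fun _ => hM⟩
          · exact ⟨0, fun h => absurd h hr⟩
        choose M hM using hMex
        set Mx := Finset.sup (Finset.range d) M with hMx
        refine ⟨p + d * (Mx + 1), fun n hn => ?_⟩
        have hnp : p ≤ n := le_trans (Nat.le_add_right p _) hn
        rw [Set.eq_empty_iff_forall_notMem]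
        rintro x ⟨⟨y, hyK, rfl⟩, hxj⟩
        have h1' : ψ^[n] y ∈ S (σ^[n] i) := horb n i y hyK.2
        have h2 : σ^[n] i = j := huniq _ _ _ h1' hxj.2
        set r := (n - p) % d with hr
        have hrd : r < d := Nat.mod_lt _ (by omega)
        have hσr : σ^[p + r] i = j := by rw [← hred n hnp]; exact h2
        set k := (n - p) / d with hkdef
        have h3 : d * (Mx + 1) ≤ n - p := Nat.le_sub_of_add_le (by rw [add_comm]; exact hn)
        have hkM : Mx + 1 ≤ k :=
          (Nat.le_div_iff_mul_le (by omega)).mpr (by rw [mul_comm]; exact h3)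
        have hkMr : M r ≤ k :=
          le_trans (le_trans (Finset.le_sup (Finset.mem_range.mpr hrd)) (Nat.le_succ Mx)) hkM
        have h4 : d * k + r = n - p := Nat.div_add_mod (n - p) d
        have hn_eq : n = d * k + (p + r) := by
          calc n = p + (n - p) := (Nat.add_sub_cancel' hnp).symm
            _ = p + (d * k + r) := by rw [h4]
            _ = d * k + (p + r) := by ring
        have himg : ψ^[n] y = (ψ^[d])^[k] (ψ^[p + r] y) := by
          rw [hn_eq, Function.iterate_add_apply, Function.iterate_mul]
        have hempty := hM r hσr k hkMr
        rw [Set.eq_empty_iff_forall_notMem] at hempty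
        exact hempty _ ⟨⟨ψ^[p + r] y, ⟨y, hyK, rfl⟩, himg.symm⟩, hxj⟩
      · push_neg at hex
        refine ⟨p, fun n hn => ?_⟩
        rw [Set.eq_empty_iff_forall_notMem]
        rintro x ⟨⟨y, hyK, rfl⟩, hxj⟩
        have h1' : ψ^[n] y ∈ S (σ^[n] i) := horb n i y hyK.2
        have h2 : σ^[n] i = j := huniq _ _ _ h1' hxj.2
        rw [hred n hn] at h2
        exact hex _ (Nat.mod_lt _ (by omega)) h2
    choose Np hNp using pair
    refine ⟨Finset.univ.sup (fun ij : Fin m × Fin m => Np ij.1 ij.2), fun n hn => ?_⟩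
    rw [Set.eq_empty_iff_forall_notMem]
    rintro x ⟨⟨y, hyK, rfl⟩, hxK⟩
    obtain ⟨i, hyi⟩ := hmemΩ y
    obtain ⟨j, hxj⟩ := hmemΩ (ψ^[n] y)
    have hNle : Np i j ≤ Finset.univ.sup (fun ij : Fin m × Fin m => Np ij.1 ij.2) :=
      Finset.le_sup (f := fun ij : Fin m × Fin m => Np ij.1 ij.2) (Finset.mem_univ (i, j))
    have hemp := hNp i j n (le_trans hNle hn)
    rw [Set.eq_empty_iff_forall_notMem] at hemp
    exact hemp _ ⟨⟨y, ⟨hyK, hyi⟩, rfl⟩, ⟨hxK, hxj⟩⟩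
  tfae_have 3 → 2 := by
    intro h3 K hK
    obtain ⟨N, hN⟩ := h3 K hK
    exact ⟨N + 1, Nat.le_add_left 1 N, hN (N + 1) (Nat.le_succ N)⟩
  tfae_have 2 → 1 := by
    intro h2 x k hk1 hkm hfix
    set K : Set ↥Ω := (fun i : Fin k => ψ^[(i : ℕ)] x) '' Set.univ with hKdef
    have hKc : IsCompact K := (Set.finite_univ.image _).isCompact
    obtain ⟨n, hn1, hne'⟩ := h2 K hKc
    have hxK : x ∈ K := ⟨⟨0, hk1⟩, Set.mem_univ _, by simp⟩
    have hper : ∀ c : ℕ, ψ^[k * c] x = x := fun c => by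
      rw [Function.iterate_mul]
      exact Function.iterate_fixed hfix c
    have hiex : ∃ i : ℕ, i < k ∧ ψ^[n] (ψ^[i] x) = x := by
      rcases Nat.eq_zero_or_pos (n % k) with h0 | hpos
      · refine ⟨0, hk1, ?_⟩
        obtain ⟨c, rfl⟩ := Nat.dvd_of_mod_eq_zero h0
        simpa using hper c
      · refine ⟨k - n % k, by omega, ?_⟩
        rw [← Function.iterate_add_apply]
        have he : n + (k - n % k) = k * (n / k + 1) := by
          have h4 := Nat.div_add_mod n k
          have h5 : n % k < k := Nat.mod_lt _ (by omega)
          rw [Nat.mul_add, Nat.mul_one]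
          set t := k * (n / k) with ht
          omega
        rw [he]
        exact hper _
    obtain ⟨i, hik, hi⟩ := hiex
    have hmem : x ∈ (ψ^[n] '' K) ∩ K :=
      ⟨⟨ψ^[(i : ℕ)] x, ⟨⟨i, hik⟩, Set.mem_univ _, rfl⟩, hi⟩, hxK⟩
    rw [hne'] at hmem
    exact hmem
  tfae_finish
end
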